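/- Let Ψ be a root datum with finite automorphism group Γ stabilizing a base. The lattices X̄* (coinvariants of X* modulo torsion) and X̄_* = X_*^Γ are in perfect duality via the pairing ⟨x̄, λ̄⟩ := ⟨ι(x̄), i_*(λ̄)⟩, and under this pairing the projection i* : X* → X̄* is the transpose of the inclusion i_* : X̄_* → X_*, i.e., ⟨i*(x), λ̄⟩ = ⟨x, i_*(λ̄)⟩ for all x ∈ X*, λ̄ ∈ X̄_*. -/

import Mathlib

open scoped BigOperators Classical

/-- The multiplicative group structure on `AddAut A` (composition), as in the older Mathlib. -/
instance AddAut.mulGroupOld (A : Type*) [Add A] : Group (AddAut A) where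
  mul g h := AddEquiv.trans h g
  one := AddEquiv.refl _
  inv := AddEquiv.symm
  mul_assoc _ _ _ := rfl
  one_mul _ := rfl
  mul_one _ := rfl
  inv_mul_cancel := AddEquiv.self_trans_symm

/-- A (not necessarily reduced) root datum `Ψ = (X*, Φ, X_*, Φ^∨)`:
dual lattices `X`, `Y` in perfect duality, a finite set of roots, and a
coroot map satisfying the usual axioms. -/
structure ZRootDatum (X Y : Type) [AddCommGroup X] [AddCommGroup Y] : Type where
  pair : X →+ Y →+ ℤ
  perfect : Function.Bijective fun x : X => pair x
  perfect' : Function.Bijective fun y : Y => pair.flip y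
  roots : Finset X
  coroot : X → Y
  pair_self : ∀ β ∈ roots, pair β (coroot β) = 2
  reflect_mem : ∀ β ∈ roots, ∀ x ∈ roots, x - pair x (coroot β) • β ∈ roots
  coreflect_mem : ∀ β ∈ roots, ∀ β' ∈ roots,
    ∃ β'' ∈ roots, coroot β' - pair β (coroot β') • coroot β = coroot β''

variable {X Y Γ : Type} [AddCommGroup X] [AddCommGroup Y] [Group Γ]

/-- The Weyl group of a root datum: the subgroup of `Aut(X)` generated by the
reflections `w_β : x ↦ x - ⟨x, β^∨⟩β` through the roots. -/
def ZRootDatum.weylGroup (Ψ : ZRootDatum X Y) : Subgroup (AddAut X) :=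
  Subgroup.closure {w : AddAut X | ∃ β ∈ Ψ.roots, ∀ x, w x = x - Ψ.pair x (Ψ.coroot β) • β}

/-- `Δ` is a base (system of simple roots) of the root datum. -/
def ZRootDatum.IsBase (Ψ : ZRootDatum X Y) (Δ : Finset X) : Prop :=
  (↑Δ : Set X) ⊆ ↑Ψ.roots ∧
  LinearIndependent ℤ (fun a : ↥(↑Δ : Set X) => (a : X)) ∧
  ∀ β ∈ Ψ.roots, ∃ c : X → ℤ,
    β = ∑ a ∈ Δ, c a • a ∧ ((∀ a ∈ Δ, 0 ≤ c a) ∨ (∀ a ∈ Δ, c a ≤ 0))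

/-- A group `Γ` acting (via `ρ` on `X*` and `ρ'` on `X_*`) by automorphisms of
the root datum `Ψ`. -/
structure RDAction (Ψ : ZRootDatum X Y) (ρ : Γ →* AddAut X) (ρ' : Γ →* AddAut Y) : Prop where
  pair_eq : ∀ γ x y, Ψ.pair (ρ γ x) (ρ' γ y) = Ψ.pair x y
  root_mem : ∀ γ, ∀ β ∈ Ψ.roots, ρ γ β ∈ Ψ.roots
  coroot_eq : ∀ γ, ∀ β ∈ Ψ.roots, Ψ.coroot (ρ γ β) = ρ' γ (Ψ.coroot β)

/-- The norm map `N : x ↦ ∑_{γ ∈ Γ} γ·x`.  For a free lattice `X`, its kernel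
is exactly the kernel of the projection of `X` onto the coinvariants `X_Γ`
modulo torsion. -/
noncomputable def normMap [Fintype Γ] (ρ : Γ →* AddAut X) : X →+ X :=
  ∑ γ : Γ, ((ρ γ : X ≃+ X) : X →+ X)

/-- The projection `i* : X* → X̄*` onto the coinvariant lattice modulo torsion. -/
noncomputable def istar [Fintype Γ] (ρ : Γ →* AddAut X) : X →+ X ⧸ (normMap ρ).ker :=
  QuotientAddGroup.mk' (normMap ρ).ker


/-- The invariant lattice `X̄_* = (X_*)^Γ`. -/
def invY (ρ' : Γ →* AddAut Y) : AddSubgroup Y where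
  carrier := {y | ∀ γ : Γ, ρ' γ y = y}
  zero_mem' := by intro γ; simp
  add_mem' := by intro a b ha hb γ; simp [map_add, ha γ, hb γ]
  neg_mem' := by intro a ha γ; simp [map_neg, ha γ]

/-!
The norm map `N = ∑ γ` is self-adjoint for the invariant pairing and acts on `X_*^Γ` as
multiplication by `|Γ|`. Hence `ker N` pairs trivially with `X_*^Γ`, so the pairing descends
to `X̄*`; and `x` pairs trivially with all invariants iff `N x` pairs trivially with all of
`X_*`, i.e. iff `x ∈ ker N`. A functional on `X_*^Γ` extends to `X_*` because `X_*^Γ` is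
saturated, so `X_* ⧸ X_*^Γ` is free; by perfectness it is then represented by some `x`.
Dually, a functional on `X̄*` pulls back to a `Γ`-invariant functional on `X*`, represented by
a cocharacter that is `Γ`-fixed since the pairing is invariant and perfect.
-/

open Function

theorem Submodule.exists_extend_of_projective_quotient {R M N : Type*} [Ring R]
    [AddCommGroup M] [Module R M] [AddCommGroup N] [Module R N]
    (p : Submodule R M) [Module.Projective R (M ⧸ p)] (f : p →ₗ[R] N) :
    ∃ g : M →ₗ[R] N, g ∘ₗ p.subtype = f := by
  obtain ⟨s, hs⟩ := p.mkQ.exists_rightInverse_of_surjective p.range_mkQ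
  have hsec : ∀ q, p.mkQ (s q) = q := LinearMap.congr_fun hs
  have hretract : ∀ x, x - s (p.mkQ x) ∈ p := fun x => by
    have : p.mkQ (x - s (p.mkQ x)) = 0 := by rw [map_sub, hsec, sub_self]
    rwa [← LinearMap.mem_ker, p.ker_mkQ] at this
  let r : M →ₗ[R] p := (LinearMap.id - s ∘ₗ p.mkQ).codRestrict p hretract
  refine ⟨f ∘ₗ r, LinearMap.ext fun x => congrArg f (Subtype.ext ?_)⟩
  simp [r, (Submodule.Quotient.mk_eq_zero p).mpr x.2]

section Action

variable (ρ : Γ →* AddAut X)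

theorem act_mul_apply (γ δ : Γ) (x : X) : ρ (γ * δ) x = ρ γ (ρ δ x) := by
  rw [map_mul]; rfl

theorem act_act_inv_apply (γ : Γ) (x : X) : ρ γ (ρ γ⁻¹ x) = x := by
  rw [← act_mul_apply, mul_inv_cancel, map_one]; rfl

instance isTorsionFree_quotient_invY [Module.IsTorsionFree ℤ X] :
    Module.IsTorsionFree ℤ (X ⧸ (invY ρ).toIntSubmodule) := by
  refine .of_smul_eq_zero fun n q hnq => or_iff_not_imp_left.mpr fun hn => ?_
  obtain ⟨x, rfl⟩ := Submodule.Quotient.mk_surjective _ q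
  rw [← Submodule.Quotient.mk_smul, Submodule.Quotient.mk_eq_zero] at hnq
  refine (Submodule.Quotient.mk_eq_zero _).mpr fun γ => ?_
  have : n • (ρ γ x - x) = 0 := by rw [smul_sub, ← map_zsmul, hnq γ, sub_self]
  exact sub_eq_zero.mp ((smul_eq_zero.mp this).resolve_left hn)

theorem exists_extend_of_invY [Module.Finite ℤ X] [Module.IsTorsionFree ℤ X]
    (f : invY ρ →+ ℤ) : ∃ g : X →+ ℤ, ∀ x : invY ρ, g x = f x := by
  obtain ⟨g, hg⟩ :=
    (invY ρ).toIntSubmodule.exists_extend_of_projective_quotient f.toIntLinearMap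
  exact ⟨g.toAddMonoidHom, fun x => LinearMap.congr_fun hg x⟩

variable [Fintype Γ]

theorem normMap_apply (x : X) : normMap ρ x = ∑ γ : Γ, ρ γ x := by
  rw [normMap, AddMonoidHom.finsetSum_apply]; rfl

theorem normMap_act (δ : Γ) (x : X) : normMap ρ (ρ δ x) = normMap ρ x := by
  simp only [normMap_apply, ← act_mul_apply]
  exact Fintype.sum_equiv (Equiv.mulRight δ) _ _ fun _ => rfl

theorem istar_act (δ : Γ) (x : X) : istar ρ (ρ δ x) = istar ρ x :=
  QuotientAddGroup.eq_iff_sub_mem.mpr <| by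
    rw [AddMonoidHom.mem_ker, map_sub, normMap_act, sub_self]

theorem normMap_mem_invY (x : X) : normMap ρ x ∈ invY ρ := fun δ => by
  simp only [normMap_apply, map_sum, ← act_mul_apply]
  exact Fintype.sum_equiv (Equiv.mulLeft δ) _ _ fun _ => rfl

theorem normMap_of_mem_invY {x : X} (hx : x ∈ invY ρ) :
    normMap ρ x = Fintype.card Γ • x := by
  rw [normMap_apply, Finset.sum_congr rfl fun γ _ => hx γ, Finset.sum_const, Finset.card_univ]

end Action

def PairingInvariant (B : X →+ Y →+ ℤ) (ρ : Γ →* AddAut X) (ρ' : Γ →* AddAut Y) : Prop :=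
  ∀ γ x y, B (ρ γ x) (ρ' γ y) = B x y

section Pairing

variable {B : X →+ Y →+ ℤ} {ρ : Γ →* AddAut X} {ρ' : Γ →* AddAut Y}

theorem PairingInvariant.pair_act_left (hB : PairingInvariant B ρ ρ') (γ : Γ) (x : X) (y : Y) :
    B (ρ γ x) y = B x (ρ' γ⁻¹ y) := by
  rw [← hB γ x, act_act_inv_apply]

variable [Fintype Γ]

theorem PairingInvariant.pair_normMap_left (hB : PairingInvariant B ρ ρ') (x : X) (y : Y) :
    B (normMap ρ x) y = B x (normMap ρ' y) := by
  simp only [normMap_apply, map_sum, AddMonoidHom.finsetSum_apply, hB.pair_act_left]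
  exact Fintype.sum_equiv (Equiv.inv Γ) _ _ fun _ => rfl

theorem PairingInvariant.pair_eq_zero_of_mem_ker_normMap (hB : PairingInvariant B ρ ρ') {x : X}
    (hx : x ∈ (normMap ρ).ker) {y : Y} (hy : y ∈ invY ρ') : B x y = 0 := by
  have : (Fintype.card Γ : ℤ) * B x y = 0 := by
    rw [← nsmul_eq_mul, ← map_nsmul, ← normMap_of_mem_invY ρ' hy, ← hB.pair_normMap_left,
      hx, map_zero, AddMonoidHom.zero_apply]
  exact (mul_eq_zero.mp this).resolve_left (Nat.cast_ne_zero.mpr Fintype.card_ne_zero)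

noncomputable def PairingInvariant.coinvariantPairing (hB : PairingInvariant B ρ ρ') :
    X ⧸ (normMap ρ).ker →+ invY ρ' →+ ℤ :=
  QuotientAddGroup.lift _ (B.compl₂ (invY ρ').subtype) fun _ hx =>
    AddMonoidHom.ext fun y => hB.pair_eq_zero_of_mem_ker_normMap hx y.2

theorem PairingInvariant.coinvariantPairing_istar (hB : PairingInvariant B ρ ρ') (x : X)
    (y : invY ρ') : hB.coinvariantPairing (istar ρ x) y = B x y :=
  rfl

theorem PairingInvariant.coinvariantPairing_injective (hB : PairingInvariant B ρ ρ')
    (hinj : Injective B) : Injective hB.coinvariantPairing := by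
  refine (injective_iff_map_eq_zero _).mpr fun a ha => ?_
  obtain ⟨x, rfl⟩ := QuotientAddGroup.mk'_surjective _ a
  refine (QuotientAddGroup.eq_zero_iff x).mpr (hinj (AddMonoidHom.ext fun y => ?_))
  rw [hB.pair_normMap_left, map_zero, AddMonoidHom.zero_apply]
  exact DFunLike.congr_fun ha ⟨_, normMap_mem_invY ρ' y⟩

theorem PairingInvariant.coinvariantPairing_surjective [Module.Finite ℤ Y]
    [Module.IsTorsionFree ℤ Y] (hB : PairingInvariant B ρ ρ') (hsurj : Surjective B) :
    Surjective hB.coinvariantPairing := by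
  intro f
  obtain ⟨g, hg⟩ := exists_extend_of_invY ρ' f
  obtain ⟨x, rfl⟩ := hsurj g
  exact ⟨istar ρ x, AddMonoidHom.ext hg⟩

theorem PairingInvariant.coinvariantPairing_flip_injective (hB : PairingInvariant B ρ ρ')
    (hinj : Injective B.flip) : Injective hB.coinvariantPairing.flip := fun _ _ h =>
  Subtype.ext <| hinj <| AddMonoidHom.ext fun x => DFunLike.congr_fun h (istar ρ x)

theorem PairingInvariant.coinvariantPairing_flip_surjective (hB : PairingInvariant B ρ ρ')
    (hbij : Bijective B.flip) : Surjective hB.coinvariantPairing.flip := by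
  intro g
  obtain ⟨y, hy⟩ := hbij.2 (g.comp (istar ρ))
  have hy_apply (x : X) : B x y = g (istar ρ x) := DFunLike.congr_fun hy x
  have hy_inv : y ∈ invY ρ' := fun γ => hbij.1 <| AddMonoidHom.ext fun x =>
    calc B x (ρ' γ y) = B (ρ γ⁻¹ x) y := by rw [hB.pair_act_left, inv_inv]
      _ = B x y := by rw [hy_apply, istar_act, hy_apply]
  exact ⟨⟨y, hy_inv⟩, QuotientAddGroup.addMonoidHom_ext _ (AddMonoidHom.ext hy_apply)⟩

end Pairing

theorem coinvariant_invariant_perfect_duality_general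
    [Fintype Γ] [Module.Free ℤ Y] [Module.Finite ℤ Y]
    (Ψ : ZRootDatum X Y) (ρ : Γ →* AddAut X) (ρ' : Γ →* AddAut Y)
    (hact : RDAction Ψ ρ ρ') :
    ∃ p : (X ⧸ (normMap ρ).ker) →+ (↥(invY ρ') →+ ℤ),
      (∀ (x : X) (y : ↥(invY ρ')), p (istar ρ x) y = Ψ.pair x ↑y) ∧
      Function.Bijective (fun a => p a) ∧
      Function.Bijective (fun y => p.flip y) := by
  have hB : PairingInvariant Ψ.pair ρ ρ' := hact.pair_eq
  exact ⟨hB.coinvariantPairing, hB.coinvariantPairing_istar,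
    ⟨hB.coinvariantPairing_injective Ψ.perfect.1, hB.coinvariantPairing_surjective Ψ.perfect.2⟩,
    ⟨hB.coinvariantPairing_flip_injective Ψ.perfect'.1,
      hB.coinvariantPairing_flip_surjective Ψ.perfect'⟩⟩

/-- The lattices `X̄*` (coinvariants of `X*` modulo torsion)
and `X̄_* = (X_*)^Γ` are in perfect duality via
`⟨x̄, λ̄⟩ := ⟨ι(x̄), i_*(λ̄)⟩`, and under this pairing the projection
`i* : X* → X̄*` is the transpose of the inclusion `i_* : X̄_* → X_*`:
`⟨i*(x), λ̄⟩ = ⟨x, i_*(λ̄)⟩` for all `x`, `λ̄`. -/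
theorem coinvariant_invariant_perfect_duality
    [Fintype Γ] [Module.Free ℤ X] [Module.Finite ℤ X]
    [Module.Free ℤ Y] [Module.Finite ℤ Y]
    (Ψ : ZRootDatum X Y) (ρ : Γ →* AddAut X) (ρ' : Γ →* AddAut Y)
    (hact : RDAction Ψ ρ ρ') :
    ∃ p : (X ⧸ (normMap ρ).ker) →+ (↥(invY ρ') →+ ℤ),
      (∀ (x : X) (y : ↥(invY ρ')), p (istar ρ x) y = Ψ.pair x ↑y) ∧
      Function.Bijective (fun a => p a) ∧
      Function.Bijective (fun y => p.flip y) :=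
  coinvariant_invariant_perfect_duality_general Ψ ρ ρ' hact
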